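/- arXiv:1112.0358 — 3 statements merged into one kernel-verified Lean document; each statement's English description precedes it below -/
import Mathlib

section
/- Let α and β be natural numbers. Then there exist integers c_l for α ≤ l ≤ α+β and integers d_m for β ≤ m ≤ α+β, depending at most on α and β, with d_β ≠ 0, such that one has the polynomial identity c_α + Σ_{l=1}^{β} c_{α+l}(x+1)^{α+l} = Σ_{m=β}^{α+β} d_m x^m in ℤ[x]. -/
/-!
With `N = (α + β)!`, integrating `N xᵝ⁻¹ (x + 1)^α` from `0` gives an integral polynomial `q`
supported in degrees `β, …, α + β` whose `xᵝ` coefficient is `N / β ≠ 0`. The polynomial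
`p(y) = q(y - 1)` has derivative `N y^α (y - 1)ᵝ⁻¹`, so it has no monomials of degree `1, …, α`
and degree at most `α + β`; the identity is `p(x + 1) = q(x)` written out in coefficients.
-/

open Polynomial Finset
open scoped Nat

namespace Polynomial

section Semiring

variable {R : Type*} [Semiring R]

theorem eq_sum_C_mul_X_pow_of_support_subset {p : R[X]} {s : Finset ℕ} (hs : p.support ⊆ s) :
    p = ∑ m ∈ s, C (p.coeff m) * X ^ m := by
  conv_lhs => rw [p.as_sum_support_C_mul_X_pow]
  exact sum_subset hs fun m _ hm => by rw [notMem_support_iff.mp hm, C_0, zero_mul]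

theorem support_X_pow_mul_subset (a : ℕ) (r : R[X]) :
    (X ^ a * r).support ⊆ Icc a (a + r.natDegree) := by
  intro k hk
  rw [mem_support_iff, coeff_X_pow_mul'] at hk
  split_ifs at hk with hak
  · have hdeg := le_natDegree_of_ne_zero hk
    exact mem_Icc.2 ⟨hak, by omega⟩
  · exact absurd rfl hk

end Semiring

theorem exists_derivative_eq_C_factorial_mul {R : Type*} [CommSemiring R] (h : R[X]) {D : ℕ}
    (hD : h.natDegree < D) : ∃ q : R[X], q.coeff 0 = 0 ∧ derivative q = C (D ! : R) * h := by
  refine ⟨∑ k ∈ range D, C (((D ! / (k + 1) : ℕ) : R) * h.coeff k) * X ^ (k + 1), ?_, ?_⟩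
  · simp
  · conv_rhs => rw [h.as_sum_range_C_mul_X_pow' hD, mul_sum]
    rw [derivative_sum]
    refine sum_congr rfl fun k hk => ?_
    rw [derivative_C_mul_X_pow, ← mul_assoc, ← C_mul, add_tsub_cancel_right, mul_right_comm,
      ← Nat.cast_mul, Nat.div_mul_cancel (Nat.dvd_factorial k.succ_pos (mem_range.1 hk))]

section CharZero

variable {R : Type*} [Semiring R] [NoZeroDivisors R] [CharZero R] {p r : R[X]} {N : R} {a : ℕ}

theorem coeff_succ_eq_zero_iff_of_derivative_eq {h : R[X]} (hN : N ≠ 0)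
    (hp : derivative p = C N * h) (k : ℕ) : p.coeff (k + 1) = 0 ↔ h.coeff k = 0 := by
  have hk := congrArg (coeff · k) hp
  simp only [coeff_derivative, coeff_C_mul] at hk
  rw [← mul_eq_zero_iff_right (Nat.cast_add_one_ne_zero k), hk, mul_eq_zero_iff_left hN]

theorem support_subset_of_derivative_eq_C_mul_X_pow_mul (hN : N ≠ 0)
    (hp : derivative p = C N * (X ^ a * r)) :
    p.support ⊆ insert 0 (Icc (a + 1) (a + r.natDegree + 1)) := by
  rintro (_ | k) hk
  · exact mem_insert_self _ _
  · have hk' : k ∈ Icc a (a + r.natDegree) := support_X_pow_mul_subset a r <|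
      mem_support_iff.2 fun h => mem_support_iff.1 hk
        ((coeff_succ_eq_zero_iff_of_derivative_eq hN hp k).2 h)
    simp only [mem_insert, mem_Icc] at hk' ⊢
    omega

theorem coeff_succ_ne_zero_of_derivative_eq_C_mul_X_pow_mul (hN : N ≠ 0)
    (hp : derivative p = C N * (X ^ a * r)) (hr : r.coeff 0 ≠ 0) : p.coeff (a + 1) ≠ 0 := by
  rwa [Ne, coeff_succ_eq_zero_iff_of_derivative_eq hN hp, coeff_X_pow_mul', if_pos le_rfl,
    Nat.sub_self]

end CharZero

end Polynomial

theorem exists_comp_X_add_one_eq (α n : ℕ) :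
    ∃ p q : ℤ[X], p.comp (X + 1) = q ∧ p.support ⊆ insert 0 (Icc (α + 1) (α + n + 1)) ∧
      q.support ⊆ Icc (n + 1) (α + n + 1) ∧ q.coeff (n + 1) ≠ 0 := by
  have hN : ((α + n + 1)! : ℤ) ≠ 0 := Nat.cast_ne_zero.2 (Nat.factorial_ne_zero _)
  obtain ⟨q, hq0, hq⟩ := exists_derivative_eq_C_factorial_mul
    (X ^ n * (X + C 1) ^ α : ℤ[X]) (D := α + n + 1)
    (by rw [natDegree_X_pow_mul (hp := pow_ne_zero α (X_add_C_ne_zero 1)), natDegree_pow,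
      natDegree_X_add_C]; omega)
  have hp : derivative (q.comp (X - C 1)) = C ((α + n + 1)! : ℤ) * (X ^ α * (X - C 1) ^ n) := by
    rw [derivative_comp, hq, derivative_X_sub_C, one_mul, mul_comp, mul_comp, C_comp, pow_comp,
      pow_comp, X_comp, add_comp, X_comp, C_comp, sub_add_cancel, mul_comm (_ ^ n)]
  refine ⟨q.comp (X - C 1), q, by simp [comp_assoc], ?_, ?_, ?_⟩
  · have hsupp := support_subset_of_derivative_eq_C_mul_X_pow_mul hN hp
    rwa [natDegree_pow, natDegree_X_sub_C, mul_one] at hsupp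
  · intro m hm
    rcases mem_insert.1 (support_subset_of_derivative_eq_C_mul_X_pow_mul hN hq hm) with rfl | hm'
    · exact absurd hq0 (mem_support_iff.1 hm)
    · rw [natDegree_pow, natDegree_X_add_C, mul_one, mem_Icc] at hm'
      exact mem_Icc.2 (by omega)
  · exact coeff_succ_ne_zero_of_derivative_eq_C_mul_X_pow_mul hN hq
      (by simp [coeff_zero_eq_eval_zero])

theorem exists_coeffs_of_comp_X_add_one_eq {α β : ℕ} {p q : ℤ[X]} (hpq : p.comp (X + 1) = q)
    (hp : p.support ⊆ insert 0 (Icc (α + 1) (α + β))) (hq : q.support ⊆ Icc β (α + β))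
    (hqβ : q.coeff β ≠ 0) :
    ∃ c d : ℕ → ℤ, d β ≠ 0 ∧
      (C (c α) + ∑ l ∈ Icc 1 β, C (c (α + l)) * (X + 1) ^ (α + l) : ℤ[X]) =
        ∑ m ∈ Icc β (α + β), C (d m) * X ^ m := by
  refine ⟨Function.update p.coeff α (p.coeff 0), q.coeff, hqβ, ?_⟩
  conv_rhs => rw [← eq_sum_C_mul_X_pow_of_support_subset hq, ← hpq,
    eq_sum_C_mul_X_pow_of_support_subset hp, Polynomial.sum_comp, sum_insert (by simp),
    ← map_add_left_Icc 1 β α, sum_map]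
  simp only [Function.update_self, mul_comp, C_comp, pow_comp, X_comp, pow_zero, mul_one]
  congr 1
  refine sum_congr rfl fun l hl => ?_
  rw [addLeftEmbedding_apply, Function.update_of_ne (by simp only [mem_Icc] at hl; omega)]

theorem statement8 (α β : ℕ) :
    ∃ (c : ℕ → ℤ) (d : ℕ → ℤ), d β ≠ 0 ∧
      (C (c α) + ∑ l ∈ Finset.Icc 1 β, C (c (α + l)) * (X + 1) ^ (α + l)
        : Polynomial ℤ) =
      ∑ m ∈ Finset.Icc β (α + β), C (d m) * X ^ m := by
  cases β with
  | zero =>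
    have hsupp : (C 1 : ℤ[X]).support ⊆ {0} := support_C_subset 1
    exact exists_coeffs_of_comp_X_add_one_eq (by simp) (hsupp.trans (by simp))
      (hsupp.trans (by simp)) (by simp)
  | succ n =>
    obtain ⟨p, q, hpq, hp, hq, hqn⟩ := exists_comp_X_add_one_eq α n
    exact exists_coeffs_of_comp_X_add_one_eq hpq hp hq hqn
end

section
/- Let k ≥ 3 and let r be an integer with 1 ≤ r ≤ k−1. There exists p₀ depending only on k such that for every prime p ≥ p₀ and every integer b ≥ 1, one has B_{0,b}^{r,k}(p) ≤ k!·p^{r(r−1)b/2}. -/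
open scoped BigOperators

/-- `Ξ_c^r(ξ)`: the set of `r`-tuples `(ξ₁,…,ξ_r)` of integers with
`1 ≤ ξᵢ ≤ p^{c+1}`, `ξᵢ ≡ ξ (mod p^c)` for each `i`, and `ξᵢ ≡ ξⱼ (mod p^{c+1})`
for no `i ≠ j`. -/
def XiSet (p c r : ℕ) (ξ : ℤ) : Set (Fin r → ℤ) :=
  {ξ' | (∀ i, 1 ≤ ξ' i ∧ ξ' i ≤ (p : ℤ) ^ (c + 1) ∧ ((p : ℤ) ^ c) ∣ (ξ' i - ξ)) ∧
    ∀ i j : Fin r, i ≠ j → ¬ ((p : ℤ) ^ (c + 1) ∣ (ξ' i - ξ' j))}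

/-- The solution set `B_{a,b}^{σ,r}(m;ξ,η)` (for `a ≥ 1`): `r`-tuples `z` with
`1 ≤ zᵢ ≤ p^{kb}`, satisfying `∑ᵢ σᵢ(zᵢ-η)^j ≡ m_j (mod p^{jb})` for `1 ≤ j ≤ k`,
and `z ≡ ξ' (mod p^{a+1})` for some `ξ' ∈ Ξ_a^r(ξ)`. -/
def Bset (p k r a b : ℕ) (σ : Fin r → ℤ) (m : ℕ → ℤ) (ξ η : ℤ) : Set (Fin r → ℤ) :=
  {z | (∀ i, 1 ≤ z i ∧ z i ≤ (p : ℤ) ^ (k * b)) ∧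
    (∀ j ∈ Finset.Icc 1 k, ((p : ℤ) ^ (j * b)) ∣ ((∑ i, σ i * (z i - η) ^ j) - m j)) ∧
    ∃ ξ' ∈ XiSet p a r ξ, ∀ i, ((p : ℤ) ^ (a + 1)) ∣ (z i - ξ' i)}

/-- The variant `B_{0,b}^{σ,r}(m;0,η)`: additionally `zᵢ ≢ η (mod p)` for each `i`,
and the congruence class condition is modulo `p` with `ξ' ∈ Ξ_0^r(0)`. -/
def Bset0 (p k r b : ℕ) (σ : Fin r → ℤ) (m : ℕ → ℤ) (η : ℤ) : Set (Fin r → ℤ) :=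
  {z | (∀ i, 1 ≤ z i ∧ z i ≤ (p : ℤ) ^ (k * b)) ∧
    (∀ j ∈ Finset.Icc 1 k, ((p : ℤ) ^ (j * b)) ∣ ((∑ i, σ i * (z i - η) ^ j) - m j)) ∧
    (∀ i, ¬ ((p : ℤ) ∣ (z i - η))) ∧
    ∃ ξ' ∈ XiSet p 0 r 0, ∀ i, ((p : ℤ)) ∣ (z i - ξ' i)}

/-- The number of equivalence classes of a set of `r`-tuples of integers under
coordinatewise congruence modulo `n`. -/
noncomputable def numClasses (n r : ℕ) (S : Set (Fin r → ℤ)) : ℕ :=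
  Set.ncard ((fun z : Fin r → ℤ => fun i => ((z i : ZMod n))) '' S)

/-!
Put `xᵢ = zᵢ - η`. Modulo `p`, the `xᵢ` are distinct units whose signed power sums
`∑ σᵢ xᵢ^j` (`1 ≤ j ≤ k`) are prescribed by `m`. The logarithmic derivative of
`∏_{σᵢ = 1} (1 - xᵢ X) / ∏_{σᵢ = -1} (1 - xᵢ X)` is determined modulo `X^k` by these power sums,
and a rational function with numerator and denominator of degree `≤ r < k` is determined by its
logarithmic derivative modulo `X^k` (as long as `r < p`). Hence all solutions have their residues
`xᵢ mod p` in one set of at most `r` elements, which leaves at most `r!` choices for them.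

Once the residues are fixed, the Jacobian of the top `r` power sums `j = k - r + 1, …, k` is a
scaled Vandermonde matrix, invertible modulo `p`, so by Hensel lifting `z mod p^{kb}` is determined
by these power sums modulo `p^{kb}`. Since `∑ σᵢ xᵢ^j ≡ m_j (mod p^{jb})` is prescribed, only
`(k - j) b` digits of each are free, which leaves `∏_j p^{(k - j) b} = p^{r(r-1)b/2}` choices.
-/

open Polynomial Finset

noncomputable section

namespace EfficientCongruencing

section LinearProducts

variable {F : Type*} [Field F] {ι : Type*}

def linearProd (s : Finset ι) (y : ι → F) : F[X] := ∏ i ∈ s, (1 - C (y i) * X)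

def truncSeries (k : ℕ) (c : ℕ → F) : F[X] := ∑ j ∈ range k, C (c (j + 1)) * X ^ j

lemma eval_linearProd (s : Finset ι) (y : ι → F) (a : F) :
    (linearProd s y).eval a = ∏ i ∈ s, (1 - y i * a) := by
  simp [linearProd, eval_prod]

lemma eval_inv_linearProd_eq_zero_iff (s : Finset ι) (y : ι → F) {c : F} (hc : c ≠ 0) :
    (linearProd s y).eval c⁻¹ = 0 ↔ ∃ i ∈ s, y i = c := by
  simp only [eval_linearProd, prod_eq_zero_iff, sub_eq_zero, eq_comm (a := (1 : F)),
    mul_inv_eq_one₀ hc]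

lemma natDegree_linearProd_le (s : Finset ι) (y : ι → F) :
    (linearProd s y).natDegree ≤ #s := by
  refine (natDegree_prod_le _ _).trans ?_
  have h : ∀ i ∈ s, (1 - C (y i) * X).natDegree ≤ 1 := fun i _ => by compute_degree
  simpa using sum_le_card_nsmul s _ 1 h

lemma eval_zero_linearProd (s : Finset ι) (y : ι → F) : (linearProd s y).eval 0 = 1 := by
  simp [eval_linearProd]

lemma truncSeries_congr {k : ℕ} {c d : ℕ → F} (h : ∀ j ∈ Icc 1 k, c j = d j) :
    truncSeries k c = truncSeries k d :=
  sum_congr rfl fun j hj => by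
    rw [h (j + 1) (mem_Icc.mpr ⟨by omega, by rw [mem_range] at hj; omega⟩)]

lemma truncSeries_sub (k : ℕ) (c d : ℕ → F) :
    truncSeries k (fun j => c j - d j) = truncSeries k c - truncSeries k d := by
  simp [truncSeries, sub_mul, sum_sub_distrib]

lemma X_pow_dvd_derivative_linearProd_add [DecidableEq ι] (k : ℕ) (s : Finset ι) (y : ι → F) :
    X ^ k ∣ derivative (linearProd s y) +
      linearProd s y * truncSeries k (fun j => ∑ i ∈ s, y i ^ j) := by
  induction s using Finset.induction_on with
  | empty => simp [linearProd, truncSeries]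
  | insert a s ha ih =>
    set L := linearProd s y
    set G := truncSeries k (fun j => ∑ i ∈ s, y i ^ j)
    have hL : linearProd (insert a s) y = (1 - C (y a) * X) * L := prod_insert ha
    have hG : truncSeries k (fun j => ∑ i ∈ insert a s, y i ^ j) =
        C (y a) * ∑ j ∈ range k, (C (y a) * X) ^ j + G := by
      simp only [truncSeries, G, sum_insert ha, C_add, add_mul, sum_add_distrib, mul_sum,
        mul_pow, ← C_pow]
      congr 1
      refine sum_congr rfl fun j _ => ?_
      rw [pow_succ', C_mul]; ring
    have hgeom := mul_neg_geom_sum (C (y a) * X) k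
    have key : derivative (linearProd (insert a s) y) +
        linearProd (insert a s) y * truncSeries k (fun j => ∑ i ∈ insert a s, y i ^ j) =
        (1 - C (y a) * X) * (derivative L + L * G) - C (y a) * L * (C (y a) * X) ^ k := by
      rw [hL, hG, derivative_mul]
      simp only [derivative_sub, derivative_one, derivative_mul, derivative_C, derivative_X,
        zero_mul, mul_one, zero_add, zero_sub]
      linear_combination (C (y a) * L) * hgeom
    rw [key, mul_pow]
    exact dvd_sub (ih.mul_left _) ((dvd_mul_left _ _).mul_left _)

lemma eq_of_X_pow_dvd_wronskian {r k : ℕ} (hrk : r < k) (hchar : ∀ s ∈ Icc 1 r, (s : F) ≠ 0)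
    {A B : F[X]} (hA0 : A.eval 0 = 1) (hB0 : B.eval 0 = 1) (hA : A.natDegree ≤ r)
    (hB : B.natDegree ≤ r) (hW : X ^ k ∣ derivative A * B - A * derivative B) : A = B := by
  by_contra hne
  have hD : B - A ≠ 0 := sub_ne_zero.mpr (Ne.symm hne)
  obtain ⟨E, hDE, hXE⟩ := (B - A).exists_eq_pow_rootMultiplicity_mul_and_not_dvd hD 0
  rw [C_0, sub_zero] at hDE hXE
  have hs0 : 0 < rootMultiplicity 0 (B - A) := (rootMultiplicity_pos hD).mpr (by simp [hA0, hB0])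
  have hsr : rootMultiplicity 0 (B - A) ≤ r := by
    have := natDegree_le_of_dvd (Dvd.intro _ hDE.symm) hD
    rw [natDegree_X_pow] at this
    exact this.trans ((natDegree_sub_le _ _).trans (max_le hB hA))
  obtain ⟨t, ht⟩ : ∃ t, rootMultiplicity 0 (B - A) = t + 1 :=
    ⟨_, (Nat.succ_pred_eq_of_pos hs0).symm⟩
  rw [ht] at hDE hsr
  -- With `B = A + X^(t+1) E`, the Wronskian is `X^t` times a polynomial whose constant term
  -- `-(t+1) E(0)` is nonzero, contradicting `X^k ∣ W` as `t < k`.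
  have hWE : derivative A * B - A * derivative B =
      X ^ t * (X * derivative A * E - C ((t + 1 : ℕ) : F) * A * E - X * A * derivative E) := by
    rw [show B = A + X ^ (t + 1) * E by rw [← hDE]; ring]
    simp only [derivative_add, derivative_mul, derivative_X_pow, Nat.add_sub_cancel]
    push_cast
    ring
  have hcoeff := (X_pow_dvd_iff.mp hW) t (by omega)
  rw [hWE, coeff_X_pow_mul', if_pos le_rfl, Nat.sub_self, coeff_zero_eq_eval_zero] at hcoeff
  have hE0 : E.eval 0 ≠ 0 := fun h => hXE (X_dvd_iff.mpr (by rwa [coeff_zero_eq_eval_zero]))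
  have hprod : ((t + 1 : ℕ) : F) * E.eval 0 = 0 := by simpa [hA0] using hcoeff
  exact (mul_eq_zero.mp hprod).elim (hchar (t + 1) (mem_Icc.mpr ⟨by omega, hsr⟩)) hE0

lemma X_pow_dvd_wronskian_linearProd_compl [Fintype ι] [DecidableEq ι] (k : ℕ) (s : Finset ι)
    (y : ι → F) :
    X ^ k ∣ derivative (linearProd s y) * linearProd sᶜ y -
      linearProd s y * derivative (linearProd sᶜ y) + linearProd s y * linearProd sᶜ y *
        truncSeries k (fun j => ∑ i ∈ s, y i ^ j - ∑ i ∈ sᶜ, y i ^ j) := by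
  have hU := X_pow_dvd_derivative_linearProd_add k s y
  have hV := X_pow_dvd_derivative_linearProd_add k sᶜ y
  rw [truncSeries_sub]
  convert dvd_sub (hU.mul_right (linearProd sᶜ y)) (hV.mul_right (linearProd s y)) using 1
  ring

lemma mem_range_of_signedPowerSum_eq [Fintype ι] [DecidableEq ι] {k : ℕ}
    (hk : Fintype.card ι < k) (hchar : ∀ n ∈ Icc 1 (Fintype.card ι), (n : F) ≠ 0)
    (s : Finset ι) {x y : ι → F} (hy : Function.Injective y) (hy0 : ∀ i, y i ≠ 0)
    (h : ∀ j ∈ Icc 1 k, ∑ i ∈ s, x i ^ j - ∑ i ∈ sᶜ, x i ^ j = ∑ i ∈ s, y i ^ j - ∑ i ∈ sᶜ, y i ^ j)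
    (i : ι) : y i ∈ Set.range x := by
  have hdeg (u v : ι → F) : (linearProd s u * linearProd sᶜ v).natDegree ≤ Fintype.card ι :=
    natDegree_mul_le.trans <| (add_le_add (natDegree_linearProd_le s u)
      (natDegree_linearProd_le sᶜ v)).trans_eq (card_add_card_compl s)
  have hcross : linearProd s y * linearProd sᶜ x = linearProd s x * linearProd sᶜ y := by
    refine eq_of_X_pow_dvd_wronskian hk hchar (by simp [eval_zero_linearProd])
      (by simp [eval_zero_linearProd]) (hdeg y x) (hdeg x y) ?_
    have hx := X_pow_dvd_wronskian_linearProd_compl k s x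
    have hy := X_pow_dvd_wronskian_linearProd_compl k s y
    rw [truncSeries_congr h] at hx
    convert dvd_sub (hy.mul_right (linearProd s x * linearProd sᶜ x))
      (hx.mul_right (linearProd s y * linearProd sᶜ y)) using 1
    simp only [derivative_mul]
    ring
  have heval := congrArg (eval (y i)⁻¹) hcross
  simp only [eval_mul] at heval
  by_cases hi : i ∈ s
  · have hUy : (linearProd s y).eval (y i)⁻¹ = 0 :=
      (eval_inv_linearProd_eq_zero_iff s y (hy0 i)).mpr ⟨i, hi, rfl⟩
    have hVy : (linearProd sᶜ y).eval (y i)⁻¹ ≠ 0 := fun h0 => by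
      obtain ⟨l, hl, hly⟩ := (eval_inv_linearProd_eq_zero_iff sᶜ y (hy0 i)).mp h0
      exact mem_compl.mp hl (hy hly ▸ hi)
    rw [hUy, zero_mul, eq_comm, mul_eq_zero, or_iff_left hVy,
      eval_inv_linearProd_eq_zero_iff s x (hy0 i)] at heval
    obtain ⟨l, -, hl⟩ := heval
    exact ⟨l, hl⟩
  · have hVy : (linearProd sᶜ y).eval (y i)⁻¹ = 0 :=
      (eval_inv_linearProd_eq_zero_iff sᶜ y (hy0 i)).mpr ⟨i, mem_compl.mpr hi, rfl⟩
    have hUy : (linearProd s y).eval (y i)⁻¹ ≠ 0 := fun h0 => by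
      obtain ⟨l, hl, hly⟩ := (eval_inv_linearProd_eq_zero_iff s y (hy0 i)).mp h0
      exact hi (hy hly ▸ hl)
    rw [hVy, mul_zero, mul_eq_zero, or_iff_right hUy,
      eval_inv_linearProd_eq_zero_iff sᶜ x (hy0 i)] at heval
    obtain ⟨l, -, hl⟩ := heval
    exact ⟨l, hl⟩

end LinearProducts

lemma sum_intCast_mul_pow_eq_sub {R ι : Type*} [CommRing R] [Fintype ι] [DecidableEq ι]
    {σ : ι → ℤ} (hσ : ∀ i, σ i = 1 ∨ σ i = -1) (y : ι → R) (j : ℕ) :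
    ∑ i, (σ i : R) * y i ^ j =
      ∑ i ∈ univ.filter (σ · = 1), y i ^ j - ∑ i ∈ (univ.filter (σ · = 1))ᶜ, y i ^ j := by
  rw [← sum_add_sum_compl (univ.filter (σ · = 1)), sub_eq_add_neg, ← sum_neg_distrib]
  congr 1
  · exact sum_congr rfl fun i hi => by simp [(mem_filter.mp hi).2]
  · refine sum_congr rfl fun i hi => ?_
    have hi : σ i ≠ 1 := by simpa using hi
    simp [(hσ i).resolve_left hi]

lemma eq_zero_of_forall_sum_jacobian_eq_zero {F : Type*} [Field F] {r e : ℕ} {d y v : Fin r → F}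
    (hy : Function.Injective y) (hy0 : ∀ i, y i ≠ 0) (hd : ∀ i, d i ≠ 0)
    (he : ∀ t : Fin r, ((e + 1 + t : ℕ) : F) ≠ 0)
    (hv : ∀ t : Fin r, ∑ i, ((e + 1 + t : ℕ) : F) * d i * y i ^ (e + t) * v i = 0) : v = 0 := by
  have hw : (fun i => d i * y i ^ e * v i) = 0 := by
    refine Matrix.eq_zero_of_forall_pow_sum_mul_pow_eq_zero hy fun t => ?_
    have h : ((e + 1 + t : ℕ) : F) * ∑ j, d j * y j ^ e * v j * y j ^ (t : ℕ) = 0 := by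
      rw [← hv t, mul_sum]
      exact sum_congr rfl fun j _ => by ring
    exact (mul_eq_zero.mp h).resolve_left (he t)
  funext i
  have := congrFun hw i
  simpa [hd i, hy0 i] using this

section Hensel

variable {p : ℕ} [Fact p.Prime] {r e : ℕ} {σ x : Fin r → ℤ}

lemma pow_succ_dvd_sub_of_pow_dvd_sub {s : ℕ} (hs : 1 ≤ s)
    (hJ : ∀ v : Fin r → ZMod p,
      (∀ t : Fin r, ∑ i, ((e + 1 + t : ℕ) : ZMod p) * σ i * x i ^ (e + t) * v i = 0) → v = 0)
    {x' : Fin r → ℤ} (hxs : ∀ i, (p : ℤ) ^ s ∣ x' i - x i)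
    (htop : ∀ t : Fin r,
      (p : ℤ) ^ (s + 1) ∣ ∑ i, σ i * x' i ^ (e + 1 + t) - ∑ i, σ i * x i ^ (e + 1 + t))
    (i : Fin r) : (p : ℤ) ^ (s + 1) ∣ x' i - x i := by
  choose u hu using hxs
  have hlin (t : Fin r) : (p : ℤ) ∣ ∑ i, ((e + 1 + t : ℕ) : ℤ) * σ i * x i ^ (e + t) * u i := by
    -- Taylor expansion at `x i`: the terms of order `≥ 2` in `x' i - x i = p^s u i` are
    -- divisible by `p^(2s)`, hence by `p^(s+1)`.
    have htaylor (i : Fin r) : (p : ℤ) ^ (s + 1) ∣ x' i ^ (e + 1 + t) - x i ^ (e + 1 + t) -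
        (p : ℤ) ^ s * (((e + 1 + t : ℕ) : ℤ) * x i ^ (e + t) * u i) := by
      have h := sq_dvd_add_pow_sub_sub (x' i - x i) (x i) (e + 1 + t)
      rw [add_sub_cancel, hu i, show e + 1 + (t : ℕ) - 1 = e + t by omega] at h
      refine dvd_trans ?_ (h.trans (dvd_of_eq (by ring)))
      rw [mul_pow, ← pow_mul]
      exact (pow_dvd_pow _ (by omega)).mul_right _
    have hsum : (p : ℤ) ^ (s + 1) ∣
        (p : ℤ) ^ s * ∑ i, ((e + 1 + t : ℕ) : ℤ) * σ i * x i ^ (e + t) * u i := by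
      have key : (p : ℤ) ^ s * ∑ i, ((e + 1 + t : ℕ) : ℤ) * σ i * x i ^ (e + t) * u i =
          (∑ i, σ i * x' i ^ (e + 1 + t) - ∑ i, σ i * x i ^ (e + 1 + t)) -
            ∑ i, σ i * (x' i ^ (e + 1 + t) - x i ^ (e + 1 + t) -
              (p : ℤ) ^ s * (((e + 1 + t : ℕ) : ℤ) * x i ^ (e + t) * u i)) := by
        rw [mul_sum, ← sum_sub_distrib, ← sum_sub_distrib]
        exact sum_congr rfl fun i _ => by ring
      rw [key]
      exact dvd_sub (htop t) (dvd_sum fun i _ => (htaylor i).mul_left (σ i))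
    have hp : (p : ℤ) ≠ 0 := by exact_mod_cast (Fact.out : p.Prime).ne_zero
    rwa [pow_succ, mul_dvd_mul_iff_left (pow_ne_zero _ hp)] at hsum
  have hu0 := hJ (fun i => (u i : ZMod p)) fun t => by
    have := (ZMod.intCast_zmod_eq_zero_iff_dvd _ p).mpr (hlin t)
    push_cast at this ⊢
    exact this
  rw [hu i, pow_succ]
  exact mul_dvd_mul_left _ ((ZMod.intCast_zmod_eq_zero_iff_dvd _ p).mp (congrFun hu0 i))

lemma pow_dvd_sub_of_powerSum_dvd
    (hJ : ∀ v : Fin r → ZMod p,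
      (∀ t : Fin r, ∑ i, ((e + 1 + t : ℕ) : ZMod p) * σ i * x i ^ (e + t) * v i = 0) → v = 0)
    {x' : Fin r → ℤ} (hbase : ∀ i, (p : ℤ) ∣ x' i - x i) {N : ℕ}
    (htop : ∀ t : Fin r,
      (p : ℤ) ^ N ∣ ∑ i, σ i * x' i ^ (e + 1 + t) - ∑ i, σ i * x i ^ (e + 1 + t)) (i : Fin r) :
    (p : ℤ) ^ N ∣ x' i - x i := by
  rcases Nat.eq_zero_or_pos N with rfl | hN
  · simp
  suffices ∀ s, 1 ≤ s → s ≤ N → ∀ i, (p : ℤ) ^ s ∣ x' i - x i from this N hN le_rfl i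
  intro s hs
  induction s, hs using Nat.le_induction with
  | base => simpa using fun _ => hbase
  | succ s hs ih =>
    exact fun hsN => pow_succ_dvd_sub_of_pow_dvd_sub hs hJ (ih (by omega))
      fun t => (pow_dvd_pow _ hsN).trans (htop t)

end Hensel

lemma natCast_ne_zero_of_pos_of_lt {p n : ℕ} (h0 : 0 < n) (hn : n < p) : (n : ZMod p) ≠ 0 := by
  rw [Ne, ZMod.natCast_eq_zero_iff]
  exact Nat.not_dvd_of_pos_of_lt h0 hn

lemma mul_dvd_sub_of_intCast_ediv_eq {d a a' : ℤ} {n : ℕ} (ha : d ∣ a) (ha' : d ∣ a')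
    (h : ((a / d : ℤ) : ZMod n) = ((a' / d : ℤ) : ZMod n)) : d * n ∣ a' - a := by
  obtain ⟨c, rfl⟩ := ha
  obtain ⟨c', rfl⟩ := ha'
  rcases eq_or_ne d 0 with rfl | hd
  · simp
  rw [Int.mul_ediv_cancel_left _ hd, Int.mul_ediv_cancel_left _ hd,
    ZMod.intCast_eq_intCast_iff_dvd_sub] at h
  rw [← mul_sub]
  exact mul_dvd_mul_left d h

lemma card_pi_zmod_pow (p r b : ℕ) [NeZero p] :
    Fintype.card (∀ t : Fin r, ZMod (p ^ ((r - 1 - t) * b))) = p ^ (r * (r - 1) * b / 2) := by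
  rw [Fintype.card_pi]
  simp only [ZMod.card]
  rw [prod_pow_eq_pow_sum, Fin.sum_univ_eq_sum_range (fun t => (r - 1 - t) * b) r, ← sum_mul,
    sum_range_reflect (fun t => t) r, ← sum_range_id_mul_two r, mul_right_comm,
    Nat.mul_div_cancel _ two_pos]

lemma card_embedding_le_factorial {α β : Type*} [Fintype α] [Fintype β]
    (h : Fintype.card β ≤ Fintype.card α) :
    Fintype.card (α ↪ β) ≤ (Fintype.card α).factorial := by
  rw [Fintype.card_embedding_eq]
  exact (Nat.descFactorial_le _ h).trans_eq (Nat.descFactorial_self _)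

section Bset0

variable {p k r b : ℕ} {σ : Fin r → ℤ} {m : ℕ → ℤ} {η : ℤ} {z w : Fin r → ℤ}

def residue (p : ℕ) (η : ℤ) (z : Fin r → ℤ) (i : Fin r) : ZMod p := ((z i - η : ℤ) : ZMod p)

/-- For the top exponents `j = k - r + 1 + t`, the digits of `(∑ σᵢ (zᵢ - η)^j - m_j) / p^{jb}`
that are not yet fixed modulo `p^{kb}`. -/
def topQuotient (p k r b : ℕ) (σ : Fin r → ℤ) (m : ℕ → ℤ) (η : ℤ) (z : Fin r → ℤ) (t : Fin r) :
    ZMod (p ^ ((r - 1 - t) * b)) :=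
  (((∑ i, σ i * (z i - η) ^ (k - r + 1 + t) - m (k - r + 1 + t)) /
    (p : ℤ) ^ ((k - r + 1 + t) * b) : ℤ) : ZMod (p ^ ((r - 1 - t) * b)))

lemma Bset0_finite : (Bset0 p k r b σ m η).Finite :=
  (Set.Finite.pi fun _ => Set.finite_Icc (1 : ℤ) ((p : ℤ) ^ (k * b))).subset
    fun _ hz => Set.mem_univ_pi.mpr fun i => hz.1 i

lemma residue_injective (hz : z ∈ Bset0 p k r b σ m η) : Function.Injective (residue p η z) := by
  intro i i' h
  obtain ⟨ξ, ⟨-, hξ⟩, hzξ⟩ := hz.2.2.2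
  by_contra hne
  apply hξ i i' hne
  have hii' := (ZMod.intCast_eq_intCast_iff_dvd_sub _ _ p).mp h
  rw [zero_add, pow_one, show ξ i - ξ i' = (z i' - ξ i') - (z i - ξ i) - ((z i' - η) - (z i - η))
    by ring]
  exact dvd_sub (dvd_sub (hzξ i') (hzξ i)) hii'

lemma residue_ne_zero (hz : z ∈ Bset0 p k r b σ m η) (i : Fin r) : residue p η z i ≠ 0 :=
  fun h => hz.2.2.1 i ((ZMod.intCast_zmod_eq_zero_iff_dvd _ p).mp h)

lemma sum_mul_residue_pow (hb : 1 ≤ b) (hz : z ∈ Bset0 p k r b σ m η) {j : ℕ} (hj : j ∈ Icc 1 k) :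
    ∑ i, (σ i : ZMod p) * residue p η z i ^ j = m j := by
  have hjb : j * b ≠ 0 := (Nat.mul_pos (mem_Icc.mp hj).1 hb).ne'
  have h := (ZMod.intCast_eq_intCast_iff_dvd_sub (m j) _ p).mpr
    ((dvd_pow_self _ hjb).trans (hz.2.1 j hj))
  unfold residue
  push_cast at h ⊢
  exact h.symm

lemma residue_mem_range_residue [Fact p.Prime] (hpk : k < p) (hrk : r < k) (hb : 1 ≤ b)
    (hσ : ∀ i, σ i = 1 ∨ σ i = -1) (hw : w ∈ Bset0 p k r b σ m η) (hz : z ∈ Bset0 p k r b σ m η)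
    (i : Fin r) : residue p η z i ∈ Set.range (residue p η w) :=
  mem_range_of_signedPowerSum_eq (by simpa using hrk)
    (fun n hn => by
      rw [Fintype.card_fin, mem_Icc] at hn
      exact natCast_ne_zero_of_pos_of_lt (by omega) (by omega))
    (univ.filter (σ · = 1)) (residue_injective hz) (residue_ne_zero hz)
    (fun j hj => by
      rw [← sum_intCast_mul_pow_eq_sub hσ (residue p η w),
        ← sum_intCast_mul_pow_eq_sub hσ (residue p η z),
        sum_mul_residue_pow hb hw hj, sum_mul_residue_pow hb hz hj]) i

lemma eq_of_residue_eq_of_topQuotient_eq [Fact p.Prime] (hpk : k < p) (hrk : r < k)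
    (hσ : ∀ i, σ i = 1 ∨ σ i = -1) (hz : z ∈ Bset0 p k r b σ m η) (hw : w ∈ Bset0 p k r b σ m η)
    (hres : residue p η z = residue p η w)
    (hq : topQuotient p k r b σ m η z = topQuotient p k r b σ m η w) : z = w := by
  have hJ (v : Fin r → ZMod p) (hv : ∀ t : Fin r, ∑ i, ((k - r + 1 + t : ℕ) : ZMod p) * σ i *
      ((z i - η : ℤ) : ZMod p) ^ (k - r + t) * v i = 0) : v = 0 :=
    eq_zero_of_forall_sum_jacobian_eq_zero (residue_injective hz) (residue_ne_zero hz)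
      (fun i => by rcases hσ i with h | h <;> simp [h])
      (fun t => natCast_ne_zero_of_pos_of_lt (by omega) (by omega)) hv
  have htop (t : Fin r) : (p : ℤ) ^ (k * b) ∣ ∑ i, σ i * (w i - η) ^ (k - r + 1 + t) -
      ∑ i, σ i * (z i - η) ^ (k - r + 1 + t) := by
    have hj : k - r + 1 + (t : ℕ) ∈ Icc 1 k := mem_Icc.mpr ⟨by omega, by omega⟩
    have h := mul_dvd_sub_of_intCast_ediv_eq (hz.2.1 _ hj) (hw.2.1 _ hj) (congrFun hq t)
    rwa [sub_sub_sub_cancel_right, Nat.cast_pow, ← pow_add, ← add_mul,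
      show k - r + 1 + (t : ℕ) + (r - 1 - t) = k by omega] at h
  have hdvd := pow_dvd_sub_of_powerSum_dvd hJ
    (fun i => (ZMod.intCast_eq_intCast_iff_dvd_sub _ _ p).mp (congrFun hres i)) htop
  funext i
  have hbox : |w i - z i| < (p : ℤ) ^ (k * b) := by
    have := hz.1 i
    have := hw.1 i
    exact abs_sub_lt_iff.mpr ⟨by linarith, by linarith⟩
  have h := Int.eq_zero_of_abs_lt_dvd (by simpa using hdvd i) hbox
  exact (sub_eq_zero.mp h).symm

theorem ncard_Bset0_le [Fact p.Prime] (hpk : k < p) (hrk : r < k) (hb : 1 ≤ b)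
    (hσ : ∀ i, σ i = 1 ∨ σ i = -1) :
    (Bset0 p k r b σ m η).ncard ≤ r.factorial * p ^ (r * (r - 1) * b / 2) := by
  rcases (Bset0 p k r b σ m η).eq_empty_or_nonempty with h | ⟨z₀, hz₀⟩
  · simp [h]
  set R := univ.image (residue p η z₀)
  have hR (z : Fin r → ℤ) (hz : z ∈ Bset0 p k r b σ m η) (i : Fin r) : residue p η z i ∈ R :=
    mem_image_univ_iff_mem_range.mpr (residue_mem_range_residue hpk hrk hb hσ hz₀ hz i)
  let Φ : Bset0 p k r b σ m η → (Fin r ↪ R) × (∀ t : Fin r, ZMod (p ^ ((r - 1 - t) * b))) :=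
    fun z => (⟨fun i => ⟨residue p η z i, hR z z.2 i⟩,
      fun _ _ h => residue_injective z.2 (congrArg Subtype.val h)⟩, topQuotient p k r b σ m η z)
  have hΦ : Function.Injective Φ := by
    rintro ⟨z, hz⟩ ⟨w, hw⟩ h
    simp only [Φ, Prod.mk.injEq] at h
    exact Subtype.ext (eq_of_residue_eq_of_topQuotient_eq hpk hrk hσ hz hw
      (funext fun i => congrArg Subtype.val (DFunLike.congr_fun h.1 i)) h.2)
  calc (Bset0 p k r b σ m η).ncard = Nat.card (Bset0 p k r b σ m η) := (Nat.card_coe_set_eq _).symm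
    _ ≤ Nat.card ((Fin r ↪ R) × (∀ t : Fin r, ZMod (p ^ ((r - 1 - t) * b)))) :=
      Nat.card_le_card_of_injective Φ hΦ
    _ = Fintype.card (Fin r ↪ R) * p ^ (r * (r - 1) * b / 2) := by
      rw [Nat.card_eq_fintype_card, Fintype.card_prod, card_pi_zmod_pow]
    _ ≤ r.factorial * p ^ (r * (r - 1) * b / 2) := by
      gcongr
      simpa using card_embedding_le_factorial (α := Fin r) (β := R)
        (by simpa using card_image_le.trans_eq (card_fin r))

end Bset0

end EfficientCongruencing

end

open EfficientCongruencing in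
theorem statement10_general (k r : ℕ) (hr1 : 1 ≤ r) (hr2 : r ≤ k - 1) :
    ∃ p₀ : ℕ, ∀ p : ℕ, p.Prime → p₀ ≤ p →
      ∀ b : ℕ, 1 ≤ b →
      ∀ η : ℤ, 1 ≤ η → η ≤ (p : ℤ) ^ b →
      ∀ σ : Fin r → ℤ, (∀ i, σ i = 1 ∨ σ i = -1) →
      ∀ m : ℕ → ℤ, (∀ j ∈ Finset.Icc 1 k, 1 ≤ m j ∧ m j ≤ (p : ℤ) ^ (k * b)) →
      numClasses (p ^ (k * b)) r (Bset0 p k r b σ m η) ≤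
        k.factorial * p ^ (r * (r - 1) * b / 2) := by
  refine ⟨k + 1, fun p hp hkp b hb η _ _ σ hσ m _ => ?_⟩
  have : Fact p.Prime := ⟨hp⟩
  calc numClasses (p ^ (k * b)) r (Bset0 p k r b σ m η)
      ≤ (Bset0 p k r b σ m η).ncard := Set.ncard_image_le Bset0_finite
    _ ≤ r.factorial * p ^ (r * (r - 1) * b / 2) := ncard_Bset0_le (by omega) (by omega) hb hσ
    _ ≤ k.factorial * p ^ (r * (r - 1) * b / 2) :=
      Nat.mul_le_mul_right _ (Nat.factorial_le (by omega))

theorem statement10 (k r : ℕ) (hk : 3 ≤ k) (hr1 : 1 ≤ r) (hr2 : r ≤ k - 1) :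
    ∃ p₀ : ℕ, ∀ p : ℕ, p.Prime → p₀ ≤ p →
      ∀ b : ℕ, 1 ≤ b →
      ∀ η : ℤ, 1 ≤ η → η ≤ (p : ℤ) ^ b →
      ∀ σ : Fin r → ℤ, (∀ i, σ i = 1 ∨ σ i = -1) →
      ∀ m : ℕ → ℤ, (∀ j ∈ Finset.Icc 1 k, 1 ≤ m j ∧ m j ≤ (p : ℤ) ^ (k * b)) →
      numClasses (p ^ (k * b)) r (Bset0 p k r b σ m η) ≤
        k.factorial * p ^ (r * (r - 1) * b / 2) :=
  statement10_general k r hr1 hr2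
end

section
/- Let k ≥ 3, let r be an integer with 1 ≤ r ≤ k−1, and set ρ = k−r+1. There exists p₀ depending only on k such that for every prime p ≥ p₀ and every integer b ≥ 1, one has B_{0,b}^{r,ρ}(p) ≤ k!. -/
open scoped BigOperators

/-! ### Auxiliary lemmas -/

/-
Let `z, w` be two solutions with the same residues mod `p`. If `z ≡ w (mod p^t)` with `t ≥ 1`,
Taylor expansion turns the congruences of degrees `j = k - r + 1, …, k` modulo `p^(t+1)` into a
linear system over `ZMod p` for `(z - w) / p^t` with matrix `(j σᵢ (wᵢ - η)^(j-1))`. This is a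
Vandermonde matrix up to invertible diagonal factors, since `k < p` and the `wᵢ - η` are distinct
units mod `p`; so classes mod `p` lift uniquely to classes mod `p^((k-r+1)b)`. Modulo `p`, Newton's
identities show that the signed power sums of degrees `≤ r` determine the multiset of residues
`zᵢ - η`, so a class mod `p` is an ordering of a fixed set of `r` residues: at most `r! ≤ k!`.
-/

open Finset

section PowerSums

variable {F ι : Type*} [Field F] [Fintype ι]

theorem esymm_map_univ_eq_of_sum_pow_eq {x y : ι → F} {n : ℕ}
    (hchar : ∀ j ∈ Icc 1 n, (j : F) ≠ 0)
    (hpow : ∀ j ∈ Icc 1 n, ∑ i, x i ^ j = ∑ i, y i ^ j) :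
    ∀ j ≤ n, (univ.val.map x).esymm j = (univ.val.map y).esymm j := by
  intro j
  induction j using Nat.strong_induction_on with
  | _ j ih =>
  intro hj
  rcases Nat.eq_zero_or_pos j with rfl | hj0
  · simp [Multiset.esymm]
  have newton (w : ι → F) : (j : F) * (univ.val.map w).esymm j =
      (-1) ^ (j + 1) * ∑ a ∈ antidiagonal j with a.1 < j,
        (-1) ^ a.1 * (univ.val.map w).esymm a.1 * ∑ i, w i ^ a.2 := by
    have h := congrArg (MvPolynomial.aeval w) (MvPolynomial.mul_esymm_eq_sum ι F j)
    simp only [map_mul, map_sum, MvPolynomial.aeval_esymm_eq_multiset_esymm] at h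
    simpa [MvPolynomial.psum] using h
  refine mul_left_cancel₀ (hchar j (mem_Icc.2 ⟨hj0, hj⟩)) ?_
  rw [newton x, newton y]
  congr 1
  refine sum_congr rfl fun a ha => ?_
  rw [mem_filter, HasAntidiagonal.mem_antidiagonal] at ha
  rw [ih a.1 ha.2 (by omega), hpow a.2 (mem_Icc.2 ⟨by omega, by omega⟩)]

theorem map_univ_eq_of_sum_pow_eq {x y : ι → F}
    (hchar : ∀ j ∈ Icc 1 (Fintype.card ι), (j : F) ≠ 0)
    (hpow : ∀ j ∈ Icc 1 (Fintype.card ι), ∑ i, x i ^ j = ∑ i, y i ^ j) :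
    univ.val.map x = univ.val.map y := by
  have hprod : ((univ.val.map x).map fun t => Polynomial.X - Polynomial.C t).prod =
      ((univ.val.map y).map fun t => Polynomial.X - Polynomial.C t).prod := by
    simp only [Multiset.prod_X_sub_X_eq_sum_esymm, Multiset.card_map, card_val, card_univ]
    refine sum_congr rfl fun j hj => ?_
    rw [esymm_map_univ_eq_of_sum_pow_eq hchar hpow j (by simpa [Nat.lt_succ_iff] using hj)]
  simpa only [Polynomial.roots_multiset_prod_X_sub_C] using congrArg Polynomial.roots hprod

theorem Multiset.add_eq_add_of_add_eq_add_of_disjoint {α : Type*} {A B A' B' : Multiset α}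
    (h : A + B' = A' + B) (hAB : Disjoint A B) (hAB' : Disjoint A' B') : A + B = A' + B' := by
  classical
  have hA : A = A' := by
    ext a
    have hcount := congrArg (count a) h
    simp only [count_add] at hcount
    have hcount_zero {X Y : Multiset α} (hXY : Disjoint X Y) : count a X = 0 ∨ count a Y = 0 := by
      by_cases ha : a ∈ X
      · exact .inr (count_eq_zero.2 (disjoint_left.1 hXY ha))
      · exact .inl (count_eq_zero.2 ha)
    have := hcount_zero hAB
    have := hcount_zero hAB'
    omega
  subst hA
  rw [add_left_cancel h]

/-- Taking `u` on the indices with `sᵢ = 1` and `v` on the others gives a family with the same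
power sums as the complementary choice; injectivity of `u` and `v` then separates the halves. -/
theorem map_univ_eq_of_signed_sum_pow_eq {s u v : ι → F} (hs : ∀ i, s i = 1 ∨ s i = -1)
    (hu : Function.Injective u) (hv : Function.Injective v)
    (hchar : ∀ j ∈ Icc 1 (Fintype.card ι), (j : F) ≠ 0)
    (hpow : ∀ j ∈ Icc 1 (Fintype.card ι), ∑ i, s i * u i ^ j = ∑ i, s i * v i ^ j) :
    univ.val.map u = univ.val.map v := by
  classical
  have hsplit (f g : ι → F) : univ.val.map (fun i => if s i = 1 then f i else g i) =
      (univ.filter (s · = 1)).val.map f + (univ.filter (¬s · = 1)).val.map g := by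
    rw [← Multiset.filter_add_not (s · = 1) univ.val, Multiset.map_add]
    congr 1
    · exact Multiset.map_congr rfl fun i hi => if_pos (Multiset.mem_filter.1 hi).2
    · exact Multiset.map_congr rfl fun i hi => if_neg (Multiset.mem_filter.1 hi).2
  have hdisj {w : ι → F} (hw : Function.Injective w) :
      Disjoint ((univ.filter (s · = 1)).val.map w) ((univ.filter (¬s · = 1)).val.map w) :=
    Multiset.disjoint_map_map.2 fun i hi i' hi' hii' =>
      (mem_filter.1 hi').2 (hw hii' ▸ (mem_filter.1 hi).2)
  have hmixed := map_univ_eq_of_sum_pow_eq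
    (x := fun i => if s i = 1 then u i else v i) (y := fun i => if s i = 1 then v i else u i)
    hchar fun j hj => by
      rw [← sub_eq_zero, ← sum_sub_distrib, ← sub_eq_zero.2 (hpow j hj), ← sum_sub_distrib]
      refine sum_congr rfl fun i _ => ?_
      by_cases h : s i = 1
      · simp [h]
      · rw [if_neg h, if_neg h, (hs i).resolve_left h]
        ring
  rw [hsplit, hsplit] at hmixed
  have hsame (w : ι → F) : univ.val.map w =
      (univ.filter (s · = 1)).val.map w + (univ.filter (¬s · = 1)).val.map w := by
    simpa only [ite_self] using hsplit w w
  rw [hsame u, hsame v]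
  exact Multiset.add_eq_add_of_add_eq_add_of_disjoint hmixed (hdisj hu) (hdisj hv)

end PowerSums

theorem ZMod.natCast_ne_zero_of_pos_of_lt {n j : ℕ} (h0 : 0 < j) (hj : j < n) :
    (j : ZMod n) ≠ 0 := by
  rw [Ne, ZMod.natCast_eq_zero_iff]
  exact fun h => absurd (Nat.le_of_dvd h0 h) (by omega)

theorem Set.ncard_le_descFactorial_of_injective {α : Type*} {r : ℕ} (Q : Finset α)
    (S : Set (Fin r → α)) (hS : ∀ f ∈ S, Function.Injective f ∧ ∀ i, f i ∈ Q) :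
    S.ncard ≤ Q.card.descFactorial r := by
  have hsub : S ⊆ Set.range fun (e : Fin r ↪ Q) (i : Fin r) => (e i : α) := fun f hf =>
    ⟨⟨fun i => ⟨f i, (hS f hf).2 i⟩, fun i j hij => (hS f hf).1 (congrArg Subtype.val hij)⟩, rfl⟩
  calc S.ncard ≤ (Set.range fun (e : Fin r ↪ Q) (i : Fin r) => (e i : α)).ncard :=
        Set.ncard_le_ncard hsub (Set.toFinite _)
    _ ≤ Nat.card (Fin r ↪ Q) := by
        rw [← Set.image_univ, ← Set.ncard_univ]
        exact Set.ncard_image_le (Set.toFinite _)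
    _ = Q.card.descFactorial r := by
        classical
        rw [Nat.card_eq_fintype_card, Fintype.card_embedding_eq, Fintype.card_coe,
          Fintype.card_fin]

theorem numClasses_le_of_lift {p q r : ℕ} (hdvd : p ∣ q) (S : Set (Fin r → ℤ))
    (h : ∀ z ∈ S, ∀ w ∈ S, (∀ i, (z i : ZMod p) = w i) → ∀ i, (z i : ZMod q) = w i) :
    numClasses q r S ≤ numClasses p r S := by
  set reduce : (Fin r → ZMod q) → (Fin r → ZMod p) := fun v i => ZMod.castHom hdvd (ZMod p) (v i)
  have hreduce (z : Fin r → ℤ) : reduce (fun i => z i) = fun i => (z i : ZMod p) :=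
    funext fun i => map_intCast _ (z i)
  have hinj : Set.InjOn reduce ((fun (z : Fin r → ℤ) i => (z i : ZMod q)) '' S) := by
    rintro - ⟨z, hz, rfl⟩ - ⟨w, hw, rfl⟩ hzw
    rw [hreduce, hreduce] at hzw
    exact funext (h z hz w hw (congrFun hzw))
  unfold numClasses
  rw [← hinj.ncard_image, ← Set.image_comp]
  exact (congrArg Set.ncard (Set.image_congr fun z _ => hreduce z)).le

section Hensel

variable {p : ℕ} [Fact p.Prime] {r ρ : ℕ} {σ y : Fin r → ℤ}

/-- One Hensel step for the system `∑ᵢ σᵢ yᵢ^(ρ+l+1) = const` (`l < r`): its Jacobian mod `p` is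
`((ρ+l+1) σᵢ yᵢ^(ρ+l))`, a Vandermonde matrix up to invertible diagonal factors. -/
theorem dvd_of_pow_succ_dvd_sum_signed_pow_sub {t : ℕ} (ht : 1 ≤ t) {e : Fin r → ℤ}
    (hσ : ∀ i, (σ i : ZMod p) ≠ 0) (hy : ∀ i, (y i : ZMod p) ≠ 0)
    (hyinj : Function.Injective fun i => (y i : ZMod p))
    (hρ : ∀ l : Fin r, ((ρ + l + 1 : ℕ) : ZMod p) ≠ 0)
    (h : ∀ l : Fin r, (p : ℤ) ^ (t + 1) ∣
      ∑ i, σ i * ((y i + p ^ t * e i) ^ (ρ + l + 1) - y i ^ (ρ + l + 1))) (i : Fin r) :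
    (p : ℤ) ∣ e i := by
  have hlinear (l : Fin r) :
      (p : ℤ) ∣ ((ρ + l + 1 : ℕ) : ℤ) * ∑ i, σ i * y i ^ (l : ℕ) * y i ^ ρ * e i := by
    have hquad : (p : ℤ) ^ (t + 1) ∣ ∑ i, σ i * ((y i + p ^ t * e i) ^ (ρ + l + 1) -
        y i ^ (ρ + l) * (p ^ t * e i) * ((ρ + l + 1 : ℕ) : ℤ) - y i ^ (ρ + l + 1)) := by
      refine dvd_sum fun i _ => Dvd.dvd.mul_left ?_ _
      refine dvd_trans ?_ (sq_dvd_add_pow_sub_sub (p ^ t * e i) (y i) (ρ + l + 1))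
      calc (p : ℤ) ^ (t + 1) ∣ (p : ℤ) ^ (t * 2) := pow_dvd_pow _ (by omega)
        _ ∣ (p ^ t * e i) ^ 2 := by rw [mul_pow, ← pow_mul]; exact dvd_mul_right _ _
    have hdiff := dvd_sub (h l) hquad
    rw [← sum_sub_distrib, pow_succ] at hdiff
    have hp : (p : ℤ) ≠ 0 := by exact_mod_cast (Fact.out : p.Prime).ne_zero
    refine (mul_dvd_mul_iff_left (pow_ne_zero t hp)).1 ?_
    convert hdiff using 1
    rw [mul_sum, mul_sum]
    refine sum_congr rfl fun i _ => ?_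
    ring
  have hvanish : (fun i => ((σ i * y i ^ ρ * e i : ℤ) : ZMod p)) = 0 := by
    refine Matrix.eq_zero_of_forall_pow_sum_mul_pow_eq_zero hyinj fun l => ?_
    have hl := (ZMod.intCast_zmod_eq_zero_iff_dvd _ p).2 (hlinear l)
    push_cast at hl
    rw [← (mul_eq_zero.1 hl).resolve_left (by exact_mod_cast hρ l)]
    refine sum_congr rfl fun i _ => ?_
    push_cast
    ring
  have hi := congrFun hvanish i
  push_cast at hi
  exact (ZMod.intCast_zmod_eq_zero_iff_dvd _ p).1
    (((mul_eq_zero.1 hi).resolve_left (mul_ne_zero (hσ i) (pow_ne_zero _ (hy i)))))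

theorem pow_dvd_sub_of_dvd_sum_signed_pow_sub {z : Fin r → ℤ}
    (hσ : ∀ i, (σ i : ZMod p) ≠ 0) (hy : ∀ i, (y i : ZMod p) ≠ 0)
    (hyinj : Function.Injective fun i => (y i : ZMod p))
    (hρ : ∀ l : Fin r, ((ρ + l + 1 : ℕ) : ZMod p) ≠ 0) (h1 : ∀ i, (p : ℤ) ∣ z i - y i) {n : ℕ}
    (h : ∀ l : Fin r, (p : ℤ) ^ n ∣ ∑ i, σ i * (z i ^ (ρ + l + 1) - y i ^ (ρ + l + 1)))
    (i : Fin r) : (p : ℤ) ^ n ∣ z i - y i := by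
  induction n generalizing i with
  | zero => simp
  | succ t ih =>
    rcases Nat.eq_zero_or_pos t with rfl | ht
    · simpa using h1 i
    choose e he using ih fun l => dvd_trans (pow_dvd_pow _ t.le_succ) (h l)
    have hz (i : Fin r) : z i = y i + p ^ t * e i := by linear_combination he i
    have he_dvd := dvd_of_pow_succ_dvd_sum_signed_pow_sub ht hσ hy hyinj hρ (e := e)
      (by simpa only [hz] using h)
    rw [he i, pow_succ]
    exact mul_dvd_mul_left _ (he_dvd i)

end Hensel

section Bset0

variable {p k r b : ℕ} {σ : Fin r → ℤ} {m : ℕ → ℤ} {η : ℤ} {z w : Fin r → ℤ}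

theorem Bset0.injective_cast (hz : z ∈ Bset0 p k r b σ m η) :
    Function.Injective fun i => (z i : ZMod p) := by
  obtain ⟨-, -, -, ξ, ⟨-, hξ⟩, hzξ⟩ := hz
  intro i j hij
  by_contra hne
  have hzij : (p : ℤ) ∣ z i - z j := (ZMod.intCast_eq_intCast_iff_dvd_sub _ _ _).1 hij.symm
  refine hξ i j hne ?_
  rw [zero_add, pow_one]
  have hξij := dvd_add (dvd_sub hzij (hzξ i)) (hzξ j)
  rwa [show z i - z j - (z i - ξ i) + (z j - ξ j) = ξ i - ξ j by ring] at hξij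

theorem Bset0.injective_cast_sub (hz : z ∈ Bset0 p k r b σ m η) :
    Function.Injective fun i => ((z i - η : ℤ) : ZMod p) := by
  intro i j hij
  apply Bset0.injective_cast hz
  simpa using hij

theorem Bset0.cast_sub_ne_zero (hz : z ∈ Bset0 p k r b σ m η) (i : Fin r) :
    ((z i - η : ℤ) : ZMod p) ≠ 0 := by
  rw [Ne, ZMod.intCast_zmod_eq_zero_iff_dvd]
  exact hz.2.2.1 i

theorem Bset0.pow_dvd_sum_sub (hz : z ∈ Bset0 p k r b σ m η) (hw : w ∈ Bset0 p k r b σ m η)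
    {j : ℕ} (hj : j ∈ Icc 1 k) :
    (p : ℤ) ^ (j * b) ∣ ∑ i, σ i * ((z i - η) ^ j - (w i - η) ^ j) := by
  have h := dvd_sub (hz.2.1 j hj) (hw.2.1 j hj)
  simp only [mul_sub, sum_sub_distrib]
  rwa [sub_sub_sub_cancel_right] at h

variable [Fact p.Prime]

theorem Bset0.cast_eq_of_cast_eq (hσ : ∀ i, σ i = 1 ∨ σ i = -1) (hkp : k < p) (hrk : r ≤ k)
    (hz : z ∈ Bset0 p k r b σ m η) (hw : w ∈ Bset0 p k r b σ m η)
    (h : ∀ i, (z i : ZMod p) = w i) (i : Fin r) :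
    (z i : ZMod (p ^ ((k - r + 1) * b))) = w i := by
  rw [ZMod.intCast_eq_intCast_iff_dvd_sub, ← sub_sub_sub_cancel_right _ _ η]
  push_cast
  refine pow_dvd_sub_of_dvd_sum_signed_pow_sub (σ := σ) (ρ := k - r) (y := fun i => z i - η)
    (z := fun i => w i - η)
    (fun i => ?_) (Bset0.cast_sub_ne_zero hz) (Bset0.injective_cast_sub hz)
    (fun l => ZMod.natCast_ne_zero_of_pos_of_lt (by omega) (by omega))
    (fun i => ?_) (fun l => ?_) i
  · rcases hσ i with h | h <;> simp [h]
  · rw [sub_sub_sub_cancel_right]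
    exact (ZMod.intCast_eq_intCast_iff_dvd_sub _ _ _).1 (h i)
  · have hn : (k - r + 1) * b ≤ (k - r + l + 1) * b := Nat.mul_le_mul_right b (by omega)
    exact (pow_dvd_pow _ hn).trans (Bset0.pow_dvd_sum_sub hw hz (mem_Icc.2 ⟨by omega, by omega⟩))

theorem Bset0.numClasses_le_factorial (hσ : ∀ i, σ i = 1 ∨ σ i = -1) (hrp : r < p) (hrk : r ≤ k)
    (hb : 1 ≤ b) : numClasses p r (Bset0 p k r b σ m η) ≤ r.factorial := by
  classical
  rcases (Bset0 p k r b σ m η).eq_empty_or_nonempty with hS | ⟨z₀, hz₀⟩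
  · simp [numClasses, hS]
  calc numClasses p r (Bset0 p k r b σ m η)
      ≤ (univ.image fun i => (z₀ i : ZMod p)).card.descFactorial r :=
        Set.ncard_le_descFactorial_of_injective _ _ ?_
    _ = r.factorial := by
        rw [card_image_of_injective _ (Bset0.injective_cast hz₀), card_univ, Fintype.card_fin,
          Nat.descFactorial_self]
  rintro - ⟨z, hz, rfl⟩
  refine ⟨Bset0.injective_cast hz, fun i => ?_⟩
  have hres := map_univ_eq_of_signed_sum_pow_eq (s := fun i => (σ i : ZMod p))
    (fun i => by rcases hσ i with h | h <;> simp [h])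
    (Bset0.injective_cast_sub hz) (Bset0.injective_cast_sub hz₀)
    (fun j hj => ZMod.natCast_ne_zero_of_pos_of_lt (mem_Icc.1 hj).1 (by simp at hj; omega))
    (fun j hj => by
      simp only [Fintype.card_fin, mem_Icc] at hj
      have hdvd := (ZMod.intCast_zmod_eq_zero_iff_dvd _ p).2 <| dvd_trans
        (dvd_pow_self (p : ℤ) (Nat.mul_ne_zero (by omega) (by omega)))
        (Bset0.pow_dvd_sum_sub hz hz₀ (mem_Icc.2 ⟨hj.1, hj.2.trans hrk⟩))
      push_cast [mul_sub, sum_sub_distrib] at hdvd ⊢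
      exact sub_eq_zero.1 hdvd)
  obtain ⟨i', -, hi'⟩ := Multiset.mem_map.1 (hres ▸ Multiset.mem_map_of_mem _ (mem_univ i))
  exact mem_image.2 ⟨i', mem_univ _, by simpa using hi'⟩

end Bset0

theorem statement12_general (k r : ℕ) (hr2 : r ≤ k - 1) :
    ∃ p₀ : ℕ, ∀ p : ℕ, p.Prime → p₀ ≤ p →
      ∀ b : ℕ, 1 ≤ b →
      ∀ η : ℤ, 1 ≤ η → η ≤ (p : ℤ) ^ b →
      ∀ σ : Fin r → ℤ, (∀ i, σ i = 1 ∨ σ i = -1) →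
      ∀ m : ℕ → ℤ, (∀ j ∈ Finset.Icc 1 k, 1 ≤ m j ∧ m j ≤ (p : ℤ) ^ (k * b)) →
      numClasses (p ^ ((k - r + 1) * b)) r (Bset0 p k r b σ m η) ≤ k.factorial := by
  refine ⟨k + 1, fun p hp hkp b hb η _ _ σ hσ m _ => ?_⟩
  have : Fact p.Prime := ⟨hp⟩
  calc numClasses (p ^ ((k - r + 1) * b)) r (Bset0 p k r b σ m η)
      ≤ numClasses p r (Bset0 p k r b σ m η) :=
        numClasses_le_of_lift (dvd_pow_self p (by positivity)) _ fun z hz w hw =>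
          Bset0.cast_eq_of_cast_eq hσ (by omega) (by omega) hz hw
    _ ≤ r.factorial := Bset0.numClasses_le_factorial hσ (by omega) (by omega) hb
    _ ≤ k.factorial := Nat.factorial_le (by omega)

theorem statement12 (k r : ℕ) (hk : 3 ≤ k) (hr1 : 1 ≤ r) (hr2 : r ≤ k - 1) :
    ∃ p₀ : ℕ, ∀ p : ℕ, p.Prime → p₀ ≤ p →
      ∀ b : ℕ, 1 ≤ b →
      ∀ η : ℤ, 1 ≤ η → η ≤ (p : ℤ) ^ b →
      ∀ σ : Fin r → ℤ, (∀ i, σ i = 1 ∨ σ i = -1) →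
      ∀ m : ℕ → ℤ, (∀ j ∈ Finset.Icc 1 k, 1 ≤ m j ∧ m j ≤ (p : ℤ) ^ (k * b)) →
      numClasses (p ^ ((k - r + 1) * b)) r (Bset0 p k r b σ m η) ≤ k.factorial :=
  statement12_general k r hr2
end
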